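/- Let A be a Z-graded ring such that A^{≥0} admits a regular sequence (r, r̃) of central homogeneous elements of A of positive degree. Then the r-torsion part of A equals the negative part: Tor_r A = A^{<0}. -/

import Mathlib

/-!
Since `r` is central of degree `d > 0`, multiplying a homogeneous element of negative degree by
a suitable power of `r` produces an element `b = r c` of degree in `[0, d)`. Multiplying `c` by
a high power of `r̃` moves it into `A^{≥0}`, so `r̃^N b ∈ r A^{≥0}`, and regularity of `r̃` on
`A^{≥0} / r A^{≥0}` gives `b ∈ r A^{≥0}`, which lives in degrees `≥ d`; hence `b = 0`.
Conversely, the non-negative part of an `r`-torsion element is `r`-torsion, hence zero because `r`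
is regular on `A^{≥0}`.
-/

/-- The subgroup of `A` of elements supported in degrees belonging to `S`. -/
def gradedPart {A : Type} [Ring A] (𝒜 : ℤ → AddSubgroup A) (S : Set ℤ) : AddSubgroup A :=
  ⨆ i ∈ S, 𝒜 i

section GradedPart

variable {A : Type} [Ring A] (𝒜 : ℤ → AddSubgroup A)

lemma mem_gradedPart_of_mem {i : ℤ} {S : Set ℤ} (hi : i ∈ S) {x : A} (hx : x ∈ 𝒜 i) :
    x ∈ gradedPart 𝒜 S :=
  le_biSup 𝒜 hi hx

lemma mul_mem_gradedPart [SetLike.GradedMul 𝒜] {S S' : Set ℤ} {y : A} {j : ℤ} (hy : y ∈ 𝒜 j)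
    (hS : ∀ i ∈ S, j + i ∈ S') {x : A} (hx : x ∈ gradedPart 𝒜 S) :
    y * x ∈ gradedPart 𝒜 S' :=
  (iSup₂_le fun i hi _ hz => mem_gradedPart_of_mem 𝒜 (hS i hi) (SetLike.mul_mem_graded hy hz) :
    gradedPart 𝒜 S ≤ (gradedPart 𝒜 S').comap (AddMonoidHom.mulLeft y)) hx

lemma disjoint_gradedPart [DirectSum.Decomposition 𝒜] {S : Set ℤ} {j : ℤ} (hj : j ∉ S) :
    Disjoint (𝒜 j) (gradedPart 𝒜 S) :=
  (DirectSum.Decomposition.isInternal 𝒜).addSubgroup_iSupIndep.disjoint_biSup hj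

lemma gradedPart_sup_eq_top [DirectSum.Decomposition 𝒜] {S T : Set ℤ}
    (hST : ∀ i, i ∈ S ∨ i ∈ T) : gradedPart 𝒜 S ⊔ gradedPart 𝒜 T = ⊤ := by
  refine eq_top_iff.2 fun a _ => DirectSum.Decomposition.inductionOn 𝒜 (zero_mem _)
    (fun {i} x => ?_) (fun _ _ => add_mem) a
  rcases hST i with hi | hi
  · exact AddSubgroup.mem_sup_left (mem_gradedPart_of_mem 𝒜 hi x.2)
  · exact AddSubgroup.mem_sup_right (mem_gradedPart_of_mem 𝒜 hi x.2)

end GradedPart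

lemma mem_of_pow_mul_mem {M : Type*} [Monoid M] {s : M} {G P : Set M}
    (hG : ∀ x ∈ G, s * x ∈ G) (hP : ∀ x ∈ G, s * x ∈ P → x ∈ P) (N : ℕ) {x : M} (hx : x ∈ G)
    (h : s ^ N * x ∈ P) : x ∈ P := by
  induction N generalizing x with
  | zero => simpa using h
  | succ N ih => exact hP x hx (ih (hG x hx) (by rwa [← mul_assoc, ← pow_succ]))

def powTorsion {A : Type*} [Ring A] (r : A) : AddSubgroup A where
  carrier := {a | ∃ m : ℕ, r ^ m * a = 0}
  zero_mem' := ⟨0, mul_zero _⟩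
  add_mem' := by
    rintro a b ⟨m, hm⟩ ⟨n, hn⟩
    have ha : r ^ (m + n) * a = 0 := by rw [add_comm, pow_add, mul_assoc, hm, mul_zero]
    have hb : r ^ (m + n) * b = 0 := by rw [pow_add, mul_assoc, hn, mul_zero]
    exact ⟨m + n, by rw [mul_add, ha, hb, add_zero]⟩
  neg_mem' := by
    rintro a ⟨m, hm⟩
    exact ⟨m, by rw [mul_neg, hm, neg_zero]⟩

lemma exists_nat_mul_add_neg_and_nonneg {d i : ℤ} (hd : 0 < d) (hi : i < 0) :
    ∃ n : ℕ, n * d + i < 0 ∧ 0 ≤ (n + 1) * d + i := by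
  have hq : i / d < 0 := Int.ediv_neg_of_neg_of_pos hi hd
  refine ⟨(-(i / d) - 1).toNat, ?_⟩
  rw [Int.toNat_of_nonneg (by omega)]
  have := Int.mul_ediv_add_emod i d
  have := Int.emod_nonneg i hd.ne'
  have := Int.emod_lt_of_pos i hd
  constructor <;> linarith

section RegularSequence

variable {A : Type} [Ring A] {𝒜 : ℤ → AddSubgroup A} [GradedRing 𝒜] {r rt : A} {d dt : ℤ}

lemma mul_mem_gradedPart_nonneg {y : A} {j : ℤ} (hy : y ∈ 𝒜 j) (hj : 0 ≤ j) {x : A}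
    (hx : x ∈ gradedPart 𝒜 {i | 0 ≤ i}) : y * x ∈ gradedPart 𝒜 {i | 0 ≤ i} :=
  mul_mem_gradedPart 𝒜 hy (fun i (hi : 0 ≤ i) => (add_nonneg hj hi : 0 ≤ j + i)) hx

lemma eq_zero_of_mem_of_eq_mul (hdt : 0 < dt) (hr : r ∈ 𝒜 d) (hrt : rt ∈ 𝒜 dt)
    (hcr : ∀ x : A, r * x = x * r)
    (hreg2 : ∀ a ∈ gradedPart 𝒜 {i | 0 ≤ i},
      (∃ b ∈ gradedPart 𝒜 {i | 0 ≤ i}, rt * a = r * b) →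
      ∃ c ∈ gradedPart 𝒜 {i | 0 ≤ i}, a = r * c)
    {b c : A} {j e : ℤ} (hb : b ∈ 𝒜 j) (hj : 0 ≤ j) (hjd : j < d) (hc : c ∈ 𝒜 e)
    (hbc : b = r * c) : b = 0 := by
  obtain ⟨N, hN⟩ := Archimedean.arch (-e) hdt
  have hrtc : rt ^ N * c ∈ gradedPart 𝒜 {i | 0 ≤ i} :=
    mem_gradedPart_of_mem 𝒜 (S := {i | 0 ≤ i}) (by omega : 0 ≤ N • dt + e)
      (SetLike.mul_mem_graded (SetLike.pow_mem_graded N hrt) hc)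
  obtain ⟨c', hc', rfl⟩ : ∃ c' ∈ gradedPart 𝒜 {i | 0 ≤ i}, b = r * c' :=
    mem_of_pow_mul_mem (G := gradedPart 𝒜 {i | 0 ≤ i})
      (P := {x | ∃ y ∈ gradedPart 𝒜 {i | 0 ≤ i}, x = r * y})
      (fun x hx => mul_mem_gradedPart_nonneg hrt hdt.le hx) hreg2 N
      (mem_gradedPart_of_mem 𝒜 (S := {i | 0 ≤ i}) hj hb)
      ⟨rt ^ N * c, hrtc, by rw [hbc, ← mul_assoc, ← hcr, mul_assoc]⟩
  have hrc' : r * c' ∈ gradedPart 𝒜 {i | d ≤ i} :=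
    mul_mem_gradedPart 𝒜 hr (fun i (hi : 0 ≤ i) => (by omega : d ≤ d + i)) hc'
  exact AddSubgroup.disjoint_def.1 (disjoint_gradedPart 𝒜 (not_le.2 hjd)) hb hrc'

lemma mem_powTorsion_of_mem_of_neg (hd : 0 < d) (hdt : 0 < dt) (hr : r ∈ 𝒜 d)
    (hrt : rt ∈ 𝒜 dt) (hcr : ∀ x : A, r * x = x * r)
    (hreg2 : ∀ a ∈ gradedPart 𝒜 {i | 0 ≤ i},
      (∃ b ∈ gradedPart 𝒜 {i | 0 ≤ i}, rt * a = r * b) →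
      ∃ c ∈ gradedPart 𝒜 {i | 0 ≤ i}, a = r * c)
    {a : A} {i : ℤ} (ha : a ∈ 𝒜 i) (hi : i < 0) : a ∈ powTorsion r := by
  obtain ⟨n, hneg, hnonneg⟩ := exists_nat_mul_add_neg_and_nonneg hd hi
  have hrn (k : ℕ) : r ^ k * a ∈ 𝒜 (k * d + i) := by
    simpa using SetLike.mul_mem_graded (SetLike.pow_mem_graded k hr) ha
  refine ⟨n + 1, eq_zero_of_mem_of_eq_mul hdt hr hrt hcr hreg2 (hrn (n + 1))
    (by simpa using hnonneg) (by push_cast; linarith) (hrn n) (by rw [pow_succ', mul_assoc])⟩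

lemma gradedPart_neg_le_powTorsion (hd : 0 < d) (hdt : 0 < dt) (hr : r ∈ 𝒜 d)
    (hrt : rt ∈ 𝒜 dt) (hcr : ∀ x : A, r * x = x * r)
    (hreg2 : ∀ a ∈ gradedPart 𝒜 {i | 0 ≤ i},
      (∃ b ∈ gradedPart 𝒜 {i | 0 ≤ i}, rt * a = r * b) →
      ∃ c ∈ gradedPart 𝒜 {i | 0 ≤ i}, a = r * c) :
    gradedPart 𝒜 {i | i < 0} ≤ powTorsion r :=
  iSup₂_le fun _ hi _ ha => mem_powTorsion_of_mem_of_neg hd hdt hr hrt hcr hreg2 ha hi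

lemma powTorsion_le_gradedPart_neg (hd : 0 ≤ d) (hr : r ∈ 𝒜 d)
    (hreg1 : ∀ a ∈ gradedPart 𝒜 {i | 0 ≤ i}, r * a = 0 → a = 0)
    (hneg : gradedPart 𝒜 {i | i < 0} ≤ powTorsion r) :
    powTorsion r ≤ gradedPart 𝒜 {i | i < 0} := by
  intro a ha
  obtain ⟨aneg, haneg, apos, hapos, rfl⟩ := AddSubgroup.mem_sup.1
    ((gradedPart_sup_eq_top 𝒜 fun i => lt_or_ge i 0).symm ▸ AddSubgroup.mem_top a)
  obtain ⟨m, hm⟩ : apos ∈ powTorsion r := by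
    simpa using sub_mem ha (hneg haneg)
  have hpos : apos = 0 :=
    mem_of_pow_mul_mem (G := gradedPart 𝒜 {i | 0 ≤ i}) (P := {0})
      (fun x hx => mul_mem_gradedPart_nonneg hr hd hx) hreg1 m hapos hm
  rwa [hpos, add_zero]

end RegularSequence

theorem torsion_eq_neg_part_general {A : Type} [Ring A]
    (𝒜 : ℤ → AddSubgroup A) [GradedRing 𝒜]
    (r rt : A) (d dt : ℤ) (hd : 0 < d) (hdt : 0 < dt)
    (hr : r ∈ 𝒜 d) (hrt : rt ∈ 𝒜 dt)
    (hcr : ∀ x : A, r * x = x * r)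
    -- `r` acts regularly on `A^{≥0}`
    (hreg1 : ∀ a ∈ gradedPart 𝒜 {i | 0 ≤ i}, r * a = 0 → a = 0)
    -- `r̃` acts regularly on `A^{≥0} / r A^{≥0}`
    (hreg2 : ∀ a ∈ gradedPart 𝒜 {i | 0 ≤ i},
      (∃ b ∈ gradedPart 𝒜 {i | 0 ≤ i}, rt * a = r * b) →
      ∃ c ∈ gradedPart 𝒜 {i | 0 ≤ i}, a = r * c) :
    {a : A | ∃ m : ℕ, r ^ m * a = 0} = (gradedPart 𝒜 {i | i < 0} : Set A) := by
  have hneg := gradedPart_neg_le_powTorsion hd hdt hr hrt hcr hreg2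
  exact congrArg SetLike.coe (le_antisymm (powTorsion_le_gradedPart_neg hd.le hr hreg1 hneg) hneg)

/-- If the non-negative part `A^{≥0}` of a `ℤ`-graded ring `A` admits a
regular sequence `(r, r̃)` of central homogeneous elements of positive degree, then the
`r`-torsion part of `A` is exactly the negative part `A^{<0}`. -/
theorem torsion_eq_neg_part {A : Type} [Ring A]
    (𝒜 : ℤ → AddSubgroup A) [GradedRing 𝒜]
    (r rt : A) (d dt : ℤ) (hd : 0 < d) (hdt : 0 < dt)
    (hr : r ∈ 𝒜 d) (hrt : rt ∈ 𝒜 dt)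
    (hcr : ∀ x : A, r * x = x * r) (hcrt : ∀ x : A, rt * x = x * rt)
    -- `r` acts regularly on `A^{≥0}`
    (hreg1 : ∀ a ∈ gradedPart 𝒜 {i | 0 ≤ i}, r * a = 0 → a = 0)
    -- `r̃` acts regularly on `A^{≥0} / r A^{≥0}`
    (hreg2 : ∀ a ∈ gradedPart 𝒜 {i | 0 ≤ i},
      (∃ b ∈ gradedPart 𝒜 {i | 0 ≤ i}, rt * a = r * b) →
      ∃ c ∈ gradedPart 𝒜 {i | 0 ≤ i}, a = r * c) :
    {a : A | ∃ m : ℕ, r ^ m * a = 0} = (gradedPart 𝒜 {i | i < 0} : Set A) :=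
  torsion_eq_neg_part_general 𝒜 r rt d dt hd hdt hr hrt hcr hreg1 hreg2
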